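/- Suppose F₂ is atomless conditionally to F₁ and let u_{1,2} : L^∞(F₂) → L^∞(F₁) be a conditional coherent utility function that is Lebesgue continuous. Then for any two bounded F₁-measurable random variables f, g there exist two comonotone random variables ξ, η ∈ L^∞(F₂) such that u_{1,2}(ξ) = f, u_{1,2}(η) = g, u_{1,2}(ξ + η) = f + g, and moreover ‖ξ‖_∞ ≤ 3 max(‖f‖_∞, ‖g‖_∞) and ‖η‖_∞ ≤ 3 max(‖f‖_∞, ‖g‖_∞). -/

import Mathlib

open MeasureTheory

/-- `F₂` is atomless conditionally to `F₁`: for every `A ∈ F₂` there is `B ∈ F₂`, `B ⊆ A`,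
with `0 < E[1_B | F₁] < E[1_A | F₁]` almost surely on the set `{E[1_A | F₁] > 0}`. -/
def CondAtomless {Ω : Type*} (m1 m2 : MeasurableSpace Ω) (μ : @Measure Ω m2) : Prop :=
  ∀ A : Set Ω, MeasurableSet[m2] A →
    ∃ B : Set Ω, MeasurableSet[m2] B ∧ B ⊆ A ∧
      ∀ᵐ ω ∂μ, 0 < (μ[A.indicator (fun _ => (1 : ℝ)) | m1]) ω →
        0 < (μ[B.indicator (fun _ => (1 : ℝ)) | m1]) ω ∧
        (μ[B.indicator (fun _ => (1 : ℝ)) | m1]) ω <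
          (μ[A.indicator (fun _ => (1 : ℝ)) | m1]) ω

/-- A real-valued function is (uniformly) bounded. -/
def Bdd {Ω : Type*} (ξ : Ω → ℝ) : Prop := ∃ C : ℝ, ∀ ω, |ξ ω| ≤ C

/-- A conditional coherent utility function `u : L^∞(F₂) → L^∞(F₁)`:  it maps bounded
`F₂`-measurable functions to bounded `F₁`-measurable ones, `u(0) = 0`, it is monotone
(`ξ ≥ 0 ⇒ u(ξ) ≥ 0`), concave, positively homogeneous with respect to nonnegative bounded
`F₁`-measurable weights, and `F₁`-translation invariant. -/
structure CondCoherentUtility {Ω : Type*} (m1 m2 : MeasurableSpace Ω) (μ : @MeasureTheory.Measure Ω m2)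
    (u : (Ω → ℝ) → Ω → ℝ) : Prop where
  map_zero : u 0 =ᵐ[μ] 0
  measurable_map : ∀ ξ, Measurable[m2] ξ → Bdd ξ → Measurable[m1] (u ξ) ∧ Bdd (u ξ)
  nonneg : ∀ ξ, Measurable[m2] ξ → Bdd ξ → (∀ ω, 0 ≤ ξ ω) → ∀ᵐ ω ∂μ, 0 ≤ u ξ ω
  concave : ∀ ξ η lam, Measurable[m2] ξ → Bdd ξ → Measurable[m2] η → Bdd η →
    Measurable[m1] lam → (∀ ω, lam ω ∈ Set.Icc (0 : ℝ) 1) →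
    ∀ᵐ ω ∂μ, lam ω * u ξ ω + (1 - lam ω) * u η ω ≤
      u (fun ω' => lam ω' * ξ ω' + (1 - lam ω') * η ω') ω
  poshom : ∀ ξ lam, Measurable[m2] ξ → Bdd ξ → Measurable[m1] lam → Bdd lam →
    (∀ ω, 0 ≤ lam ω) →
    u (fun ω' => lam ω' * ξ ω') =ᵐ[μ] fun ω => lam ω * u ξ ω
  transl : ∀ ξ a, Measurable[m2] ξ → Bdd ξ → Measurable[m1] a → Bdd a →
    u (ξ + a) =ᵐ[μ] u ξ + a

/-- The Lebesgue property: for any uniformly bounded sequence of `F₂`-measurable functions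
converging in probability, the utilities converge in probability. -/
def LebesgueProp {Ω : Type*} {m2 : MeasurableSpace Ω} (μ : MeasureTheory.Measure Ω)
    (u : (Ω → ℝ) → Ω → ℝ) : Prop :=
  ∀ (ξ : ℕ → Ω → ℝ) (η : Ω → ℝ), (∀ n, Measurable[m2] (ξ n)) → Measurable[m2] η →
    (∃ C : ℝ, ∀ n ω, |ξ n ω| ≤ C) → Bdd η →
    MeasureTheory.TendstoInMeasure μ ξ Filter.atTop η →
    MeasureTheory.TendstoInMeasure μ (fun n => u (ξ n)) Filter.atTop (u η)

/-- The Fatou property: for any uniformly bounded sequence of `F₂`-measurable functions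
converging in probability to `η`, `u(η) ≥ limsup u(ξ_n)` a.s. -/
def FatouProp {Ω : Type*} {m2 : MeasurableSpace Ω} (μ : MeasureTheory.Measure Ω)
    (u : (Ω → ℝ) → Ω → ℝ) : Prop :=
  ∀ (ξ : ℕ → Ω → ℝ) (η : Ω → ℝ), (∀ n, Measurable[m2] (ξ n)) → Measurable[m2] η →
    (∃ C : ℝ, ∀ n ω, |ξ n ω| ≤ C) → Bdd η →
    MeasureTheory.TendstoInMeasure μ ξ Filter.atTop η →
    ∀ᵐ ω ∂μ, Filter.limsup (fun n => u (ξ n) ω) Filter.atTop ≤ u η ω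

/-- Two real random variables are comonotone if
`(ξ ω − ξ ω') * (η ω − η ω') ≥ 0` for all `ω, ω'`. -/
def Comonotone' {Ω : Type*} (ξ η : Ω → ℝ) : Prop :=
  ∀ ω ω', 0 ≤ (ξ ω - ξ ω') * (η ω - η ω')

/-!
For every `F₁`-measurable `h` with `0 ≤ h ≤ 1` there is `S ∈ F₂` with `u(1_S) = h`. Take `S`
maximal (by exhaustion) among sets with `u(1_S) ≤ h`. If `u(1_S) < h` on a non-null set `D`, pick
sets `Y ⊆ Sᶜ` of vanishing measure but positive conditional probability (repeated conditional
halving); by Lebesgue continuity `u(1_{S ∪ Y}) ≤ h` still holds on a non-null `F₁`-set `G ⊆ D`,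
and `S ∪ (Y ∩ G)` contradicts maximality.

With `M = max(‖f‖_∞, ‖g‖_∞)` and `u(1_S) = 1/2 + f/(6M)`, the variables `ξ = 6M·1_S - 3M` and
`η = 3M·1_S + g - f/2 - 3M/2` are comonotone, since the `F₁`-part of `η` lies in `[-3M, 0]`, and
their utilities follow from translation invariance and positive homogeneity.
-/

open Filter Function Topology Set
open scoped ENNReal

lemma abs_indicator_one_le {Ω : Type*} (X : Set Ω) (ω : Ω) :
    |X.indicator (1 : Ω → ℝ) ω| ≤ 1 := by
  by_cases h : ω ∈ X <;> simp [h]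

theorem ENNReal.exists_iSup_le_two_mul {ι : Type*} [Nonempty ι] {f : ι → ℝ≥0∞}
    (hf : ⨆ i, f i ≠ ∞) : ∃ i, ⨆ j, f j ≤ 2 * f i := by
  by_cases h0 : ⨆ i, f i = 0
  · exact ⟨Classical.arbitrary ι, by simp [h0]⟩
  obtain ⟨i, hi⟩ := lt_iSup_iff.1 (ENNReal.half_lt_self h0 hf)
  refine ⟨i, ?_⟩
  rw [mul_comm, ← ENNReal.div_le_iff_le_mul (Or.inl two_ne_zero) (Or.inl ENNReal.ofNat_ne_top)]
  exact hi.le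

namespace MeasureTheory

variable {α : Type*} {m : MeasurableSpace α} {μ : Measure α}

/-- Greedily add a disjoint admissible set of at least half the largest admissible measure: the
added sets are disjoint, so their measures tend to zero and bound every admissible extension. -/
theorem exists_measurableSet_maximal [IsFiniteMeasure μ] (P : Set α → Prop) (h_empty : P ∅)
    (h_subset : ∀ ⦃A B⦄, MeasurableSet A → MeasurableSet B → A ⊆ B → P B → P A)
    (h_iUnion : ∀ B : ℕ → Set α, Monotone B → (∀ n, MeasurableSet (B n)) → (∀ n, P (B n)) →
      P (⋃ n, B n)) :
    ∃ B, MeasurableSet B ∧ P B ∧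
      ∀ C, MeasurableSet C → Disjoint B C → P (B ∪ C) → μ C = 0 := by
  have hstep : ∀ B, MeasurableSet B ∧ P B → ∃ C, (MeasurableSet C ∧ Disjoint B C ∧ P (B ∪ C)) ∧
      ∀ C', MeasurableSet C' → Disjoint B C' → P (B ∪ C') → μ C' ≤ 2 * μ C := by
    rintro B ⟨-, hPB⟩
    let ι := {C // MeasurableSet C ∧ Disjoint B C ∧ P (B ∪ C)}
    have : Nonempty ι := ⟨⟨∅, .empty, disjoint_empty _, by simpa using hPB⟩⟩
    obtain ⟨⟨C, hC⟩, hmax⟩ := ENNReal.exists_iSup_le_two_mul (f := fun C : ι => μ C.1)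
      (ne_top_of_le_ne_top (measure_ne_top μ univ) (iSup_le fun C => measure_mono (subset_univ _)))
    exact ⟨C, hC, fun C' h1 h2 h3 => (le_iSup (fun C : ι => μ C.1) ⟨C', h1, h2, h3⟩).trans hmax⟩
  choose! next hnext hnext_max using hstep
  let B : ℕ → Set α := fun n => Nat.rec ∅ (fun _ B => B ∪ next B) n
  have hB : ∀ n, MeasurableSet (B n) ∧ P (B n) := by
    intro n
    induction n with
    | zero => exact ⟨.empty, h_empty⟩
    | succ n ih => exact ⟨ih.1.union (hnext _ ih).1, (hnext _ ih).2.2⟩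
  have hB_mono : Monotone B := monotone_nat_of_le_succ fun n => subset_union_left
  have hdisj : Pairwise (Disjoint on fun n => next (B n)) := by
    refine (pairwise_disjoint_on _).2 fun i j hij => ?_
    have hsub : next (B i) ⊆ B j := subset_union_right.trans (hB_mono (Nat.succ_le_of_lt hij))
    exact ((hnext _ (hB j)).2.1.mono_left hsub)
  have hsmall : Tendsto (fun n => μ (next (B n))) atTop (𝓝 0) := by
    refine ENNReal.tendsto_atTop_zero_of_tsum_ne_top ?_
    rw [← measure_iUnion hdisj fun n => (hnext _ (hB n)).1]
    exact measure_ne_top μ _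
  refine ⟨⋃ n, B n, .iUnion fun n => (hB n).1,
    h_iUnion B hB_mono (fun n => (hB n).1) (fun n => (hB n).2), fun C hC hBC hPC => ?_⟩
  have hle : ∀ n, μ C ≤ 2 * μ (next (B n)) := fun n =>
    hnext_max _ (hB n) C hC (hBC.mono_left (subset_iUnion B n))
      (h_subset ((hB n).1.union hC) ((MeasurableSet.iUnion fun n => (hB n).1).union hC)
        (union_subset_union_left _ (subset_iUnion B n)) hPC)
  have h2 := ENNReal.Tendsto.const_mul hsmall (Or.inr (ENNReal.ofNat_ne_top (n := 2)))
  rw [mul_zero] at h2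
  exact nonpos_iff_eq_zero.1 (ge_of_tendsto' h2 hle)

theorem TendstoInMeasure.ae_le_of_forall_ae_le {f : ℕ → α → ℝ} {g h : α → ℝ}
    (hfg : TendstoInMeasure μ f atTop g) (hfh : ∀ n, f n ≤ᵐ[μ] h) : g ≤ᵐ[μ] h := by
  obtain ⟨ns, -, hns⟩ := hfg.exists_seq_tendsto_ae
  filter_upwards [hns, ae_all_iff.2 hfh] with ω hω hle
  exact le_of_tendsto' hω fun n => hle (ns n)

theorem tendstoInMeasure_indicator_union [IsFiniteMeasure μ] (B : Set α) {s : ℕ → Set α}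
    (hs : Tendsto (fun n => μ.real (s n)) atTop (𝓝 0)) :
    TendstoInMeasure μ (fun n => (B ∪ s n).indicator (1 : α → ℝ)) atTop (B.indicator 1) := by
  rw [tendstoInMeasure_iff_measureReal_dist]
  intro ε hε
  refine squeeze_zero (fun _ => measureReal_nonneg) (fun n => measureReal_mono fun ω hω => ?_) hs
  by_contra hωs
  by_cases hωB : ω ∈ B <;> simp [hωB, hωs, hε.not_ge] at hω

theorem measurable_indicator_one {X : Set α} (hX : MeasurableSet X) :
    Measurable (X.indicator (1 : α → ℝ)) :=
  measurable_one.indicator hX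

theorem eLpNorm_top_le_ofReal {f : α → ℝ} {C : ℝ} (hf : ∀ ω, |f ω| ≤ C) :
    eLpNorm f ⊤ μ ≤ ENNReal.ofReal C := by
  rw [eLpNorm_exponent_top]
  exact eLpNormEssSup_le_of_ae_bound (ae_of_all _ hf)

theorem ae_abs_le_toReal_of_eLpNorm_top_le {f : α → ℝ} {N : ℝ≥0∞} (hfN : eLpNorm f ⊤ μ ≤ N)
    (hN : N ≠ ∞) : ∀ᵐ ω ∂μ, |f ω| ≤ N.toReal := by
  filter_upwards [ae_le_eLpNormEssSup (f := f) (μ := μ)] with ω hω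
  rw [← eLpNorm_exponent_top] at hω
  simpa using ENNReal.toReal_mono hN (hω.trans hfN)

end MeasureTheory

namespace Bdd

variable {Ω : Type*} {ξ η : Ω → ℝ}

lemma const (c : ℝ) : Bdd (fun _ : Ω => c) := ⟨|c|, fun _ => le_rfl⟩

lemma indicator_one (X : Set Ω) : Bdd (X.indicator (1 : Ω → ℝ)) :=
  ⟨1, abs_indicator_one_le X⟩

lemma const_mul (hξ : Bdd ξ) (c : ℝ) : Bdd (fun ω => c * ξ ω) := by
  obtain ⟨C, hC⟩ := hξ
  exact ⟨|c| * C, fun ω => by rw [abs_mul]; exact mul_le_mul_of_nonneg_left (hC ω) (abs_nonneg c)⟩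

lemma add (hξ : Bdd ξ) (hη : Bdd η) : Bdd (ξ + η) := by
  obtain ⟨C, hC⟩ := hξ
  obtain ⟨D, hD⟩ := hη
  exact ⟨C + D, fun ω => (abs_add_le _ _).trans (add_le_add (hC ω) (hD ω))⟩

lemma sub (hξ : Bdd ξ) (hη : Bdd η) : Bdd (ξ - η) := by
  obtain ⟨C, hC⟩ := hξ
  obtain ⟨D, hD⟩ := hη
  exact ⟨C + D, fun ω => (abs_sub _ _).trans (add_le_add (hC ω) (hD ω))⟩

lemma eLpNorm_ne_top {m : MeasurableSpace Ω} {μ : Measure Ω} (hξ : Bdd ξ) :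
    eLpNorm ξ ⊤ μ ≠ ∞ := by
  obtain ⟨C, hC⟩ := hξ
  exact ne_top_of_le_ne_top ENNReal.ofReal_ne_top (eLpNorm_top_le_ofReal hC)

end Bdd

namespace CondCoherentUtility

variable {Ω : Type*} {m1 m2 : MeasurableSpace Ω} {μ : @Measure Ω m2}
  {u : (Ω → ℝ) → Ω → ℝ} {ξ ζ : Ω → ℝ}

lemma map_const (hu : CondCoherentUtility m1 m2 μ u) (c : ℝ) :
    u (fun _ => c) =ᵐ[μ] fun _ => c := by
  have h := hu.transl 0 (fun _ => c) measurable_const ⟨0, by simp⟩ measurable_const (Bdd.const c)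
  rw [zero_add] at h
  filter_upwards [h, hu.map_zero] with ω h h0
  simp [h, h0]

lemma map_const_mul (hu : CondCoherentUtility m1 m2 μ u) (hξ : Measurable[m2] ξ) (hξb : Bdd ξ)
    {c : ℝ} (hc : 0 ≤ c) : u (fun ω => c * ξ ω) =ᵐ[μ] fun ω => c * u ξ ω :=
  hu.poshom ξ (fun _ => c) hξ hξb measurable_const (Bdd.const c) fun _ => hc

lemma map_const_mul_add (hu : CondCoherentUtility m1 m2 μ u) (hξ : Measurable[m2] ξ)
    (hξb : Bdd ξ) {c : ℝ} (hc : 0 ≤ c) {β : Ω → ℝ} (hβ : Measurable[m1] β) (hβb : Bdd β) :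
    u (fun ω => c * ξ ω + β ω) =ᵐ[μ] fun ω => c * u ξ ω + β ω := by
  have h := hu.transl (fun ω => c * ξ ω) β (hξ.const_mul c) (hξb.const_mul c) hβ hβb
  filter_upwards [h, hu.map_const_mul hξ hξb hc] with ω h1 h2
  rw [← h2]
  exact h1

lemma map_mul_indicator_add_of_ae_eq (hu : CondCoherentUtility m1 m2 μ u)
    {S : Set Ω} (hS : MeasurableSet[m2] S) {h : Ω → ℝ} (hSh : u (S.indicator 1) =ᵐ[μ] h)
    {c : ℝ} (hc : 0 ≤ c) {β : Ω → ℝ} (hβ : Measurable[m1] β) (hβb : Bdd β) :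
    u (fun ω => c * S.indicator 1 ω + β ω) =ᵐ[μ] fun ω => c * h ω + β ω := by
  filter_upwards [hu.map_const_mul_add (measurable_indicator_one hS) (Bdd.indicator_one S) hc hβ
    hβb, hSh] with ω h1 h2
  rw [h1, h2]

lemma add_le_map_add (hu : CondCoherentUtility m1 m2 μ u) (hξ : Measurable[m2] ξ) (hξb : Bdd ξ)
    (hζ : Measurable[m2] ζ) (hζb : Bdd ζ) : ∀ᵐ ω ∂μ, u ξ ω + u ζ ω ≤ u (ξ + ζ) ω := by
  have h := hu.concave (fun ω => 2 * ξ ω) (fun ω => 2 * ζ ω) (fun _ => 1 / 2) (hξ.const_mul 2)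
    (hξb.const_mul 2) (hζ.const_mul 2) (hζb.const_mul 2) measurable_const
    fun _ => ⟨by norm_num, by norm_num⟩
  have harg : (fun ω => 1 / 2 * (2 * ξ ω) + (1 - 1 / 2) * (2 * ζ ω)) = ξ + ζ := by
    ext ω
    simp only [Pi.add_apply]
    ring
  filter_upwards [h, hu.map_const_mul hξ hξb zero_le_two, hu.map_const_mul hζ hζb zero_le_two]
    with ω h h2ξ h2ζ
  rw [harg, h2ξ, h2ζ] at h
  linarith

lemma mono (hu : CondCoherentUtility m1 m2 μ u) (hξ : Measurable[m2] ξ) (hξb : Bdd ξ)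
    (hζ : Measurable[m2] ζ) (hζb : Bdd ζ) (h : ξ ≤ ζ) : u ξ ≤ᵐ[μ] u ζ := by
  filter_upwards [hu.add_le_map_add hξ hξb (hζ.sub hξ) (hζb.sub hξb),
    hu.nonneg (ζ - ξ) (hζ.sub hξ) (hζb.sub hξb) fun ω => sub_nonneg.2 (h ω)] with ω h1 h2
  rw [add_sub_cancel] at h1
  linarith

lemma ae_eq_of_eqOn (hu : CondCoherentUtility m1 m2 μ u) {C : Set Ω} (hC : MeasurableSet[m1] C)
    (hξ : Measurable[m2] ξ) (hξb : Bdd ξ) (hζ : Measurable[m2] ζ) (hζb : Bdd ζ)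
    (h : Set.EqOn ξ ζ C) : ∀ᵐ ω ∂μ, ω ∈ C → u ξ ω = u ζ ω := by
  have h1C : Measurable[m1] (C.indicator (1 : Ω → ℝ)) := measurable_indicator_one hC
  have hw : ∀ ω, 0 ≤ C.indicator (1 : Ω → ℝ) ω := Set.indicator_nonneg fun _ _ => zero_le_one
  have harg : (fun ω => C.indicator 1 ω * ξ ω) = fun ω => C.indicator 1 ω * ζ ω := by
    ext ω
    by_cases hω : ω ∈ C
    · simp [hω, h hω]
    · simp [hω]
  filter_upwards [hu.poshom ξ _ hξ hξb h1C (Bdd.indicator_one C) hw,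
    hu.poshom ζ _ hζ hζb h1C (Bdd.indicator_one C) hw] with ω h1 h2 hω
  rw [harg, h2] at h1
  simpa [hω] using h1.symm

lemma ae_eq_of_ae_eq [IsFiniteMeasure μ] (hm : m1 ≤ m2) (hu : CondCoherentUtility m1 m2 μ u)
    (hLeb : LebesgueProp μ u) (hξ : Measurable[m2] ξ) (hξb : Bdd ξ) (hζ : Measurable[m2] ζ)
    (hζb : Bdd ζ) (h : ξ =ᵐ[μ] ζ) : u ξ =ᵐ[μ] u ζ := by
  have hconv : TendstoInMeasure μ (fun _ : ℕ => ξ) atTop ζ :=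
    tendstoInMeasure_of_tendsto_ae (fun _ => hξ.aestronglyMeasurable)
      (h.mono fun ω hω => by rw [hω]; exact tendsto_const_nhds)
  have huξ : Measurable[m2] (u ξ) := ((hu.measurable_map ξ hξ hξb).1).mono hm le_rfl
  exact tendstoInMeasure_ae_unique
    (tendstoInMeasure_of_tendsto_ae (fun _ => huξ.aestronglyMeasurable)
      (ae_of_all _ fun _ => tendsto_const_nhds))
    (hLeb _ ζ (fun _ => hξ) hζ (hξb.imp fun _ hC _ => hC) hζb hconv)

end CondCoherentUtility

section CondProb

variable {Ω : Type*} {m m₀ : MeasurableSpace Ω} {μ : @Measure Ω m₀} {X Y C : Set Ω}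

noncomputable def condProb (m : MeasurableSpace Ω) (μ : @Measure Ω m₀) (X : Set Ω) : Ω → ℝ :=
  μ[X.indicator 1 | m]

lemma measurable_condProb : Measurable[m] (condProb m μ X) :=
  stronglyMeasurable_condExp.measurable

lemma condProb_nonneg : 0 ≤ᵐ[μ] condProb m μ X :=
  condExp_nonneg (ae_of_all _ (Set.indicator_nonneg fun _ _ => zero_le_one))

variable [IsFiniteMeasure μ]

lemma integrable_indicator_one (hX : MeasurableSet[m₀] X) :
    Integrable (X.indicator (1 : Ω → ℝ)) μ :=
  (integrable_const 1).indicator hX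

lemma condProb_union (hX : MeasurableSet[m₀] X) (hY : MeasurableSet[m₀] Y) (hXY : Disjoint X Y) :
    condProb m μ (X ∪ Y) =ᵐ[μ] condProb m μ X + condProb m μ Y := by
  rw [condProb, Set.indicator_union_of_disjoint hXY]
  exact condExp_add (integrable_indicator_one hX) (integrable_indicator_one hY) m

lemma condProb_diff (hX : MeasurableSet[m₀] X) (hY : MeasurableSet[m₀] Y) (hXY : X ⊆ Y) :
    condProb m μ (Y \ X) =ᵐ[μ] condProb m μ Y - condProb m μ X := by
  have h := condProb_union (m := m) (μ := μ) hX (hY.diff hX) Set.disjoint_sdiff_right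
  rw [Set.union_sdiff_cancel hXY] at h
  filter_upwards [h] with ω h
  simp [h]

lemma condProb_inter_of_measurableSet (hX : MeasurableSet[m₀] X) (hC : MeasurableSet[m] C) :
    condProb m μ (X ∩ C) =ᵐ[μ] C.indicator (condProb m μ X) := by
  rw [condProb, Set.inter_comm, ← Set.indicator_indicator]
  exact condExp_indicator (integrable_indicator_one hX) hC

lemma integral_condProb (hm : m ≤ m₀) (hX : MeasurableSet[m₀] X) :
    ∫ ω, condProb m μ X ω ∂μ = μ.real X := by
  rw [condProb, integral_condExp hm, integral_indicator_one hX]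

lemma measure_eq_zero_iff_condProb_ae_eq_zero (hm : m ≤ m₀) (hX : MeasurableSet[m₀] X) :
    μ X = 0 ↔ condProb m μ X =ᵐ[μ] 0 := by
  constructor
  · intro h
    have h1 : X.indicator (1 : Ω → ℝ) =ᵐ[μ] 0 := by
      filter_upwards [measure_eq_zero_iff_ae_notMem.1 h] with ω hω
      simp [hω]
    exact (condExp_congr_ae h1).trans (by rw [condExp_zero])
  · intro h
    rw [← measureReal_eq_zero_iff, ← integral_condProb hm hX, integral_congr_ae h, Pi.zero_def,
      integral_zero]

lemma measureReal_le_of_condProb_le (hm : m ≤ m₀) (hX : MeasurableSet[m₀] X)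
    (hY : MeasurableSet[m₀] Y) {c : ℝ} (h : ∀ᵐ ω ∂μ, c * condProb m μ Y ω ≤ condProb m μ X ω) :
    c * μ.real Y ≤ μ.real X := by
  rw [← integral_condProb hm hX, ← integral_condProb hm hY, ← integral_const_mul]
  exact integral_mono_ae (integrable_condExp.const_mul c) integrable_condExp h

lemma measure_inter_ne_zero_of_condProb_pos (hm : m ≤ m₀) (hX : MeasurableSet[m₀] X)
    (hC : MeasurableSet[m] C) (hC0 : μ C ≠ 0) (hpos : ∀ᵐ ω ∂μ, ω ∈ C → 0 < condProb m μ X ω) :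
    μ (X ∩ C) ≠ 0 := by
  intro hXC
  apply hC0
  rw [measure_eq_zero_iff_ae_notMem]
  filter_upwards [(measure_eq_zero_iff_condProb_ae_eq_zero hm (hX.inter (hm _ hC))).1 hXC,
    condProb_inter_of_measurableSet hX hC, hpos] with ω h0 hXC hpos hωC
  rw [hXC, Set.indicator_of_mem hωC] at h0
  exact (hpos hωC).ne' h0

end CondProb

section Atomless

variable {Ω : Type*} {m1 m2 : MeasurableSpace Ω} {μ : @Measure Ω m2} [IsFiniteMeasure μ]
  {X : Set Ω}

/-- Of `B ⊆ X` given by conditional atomlessness and `X \ B`, keep on each side of the `F₁`-set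
`{2 P(B | F₁) ≤ P(X | F₁)}` the piece of smaller conditional probability. -/
lemma CondAtomless.exists_subset_two_mul_condProb_le (hm : m1 ≤ m2)
    (hca : CondAtomless m1 m2 μ) (hX : MeasurableSet[m2] X) :
    ∃ Y ⊆ X, MeasurableSet[m2] Y ∧ (∀ᵐ ω ∂μ, 0 < condProb m1 μ X ω → 0 < condProb m1 μ Y ω) ∧
      ∀ᵐ ω ∂μ, 2 * condProb m1 μ Y ω ≤ condProb m1 μ X ω := by
  obtain ⟨B, hB, hBX, hBpos⟩ := hca X hX
  replace hBpos : ∀ᵐ ω ∂μ, 0 < condProb m1 μ X ω →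
      0 < condProb m1 μ B ω ∧ condProb m1 μ B ω < condProb m1 μ X ω := hBpos
  set G := {ω | 2 * condProb m1 μ B ω ≤ condProb m1 μ X ω}
  have hG : MeasurableSet[m1] G :=
    measurableSet_le (measurable_condProb.const_mul 2) measurable_condProb
  have hdisj : Disjoint (B ∩ G) ((X \ B) ∩ Gᶜ) :=
    Set.disjoint_sdiff_right.mono Set.inter_subset_left Set.inter_subset_left
  have hY : ∀ᵐ ω ∂μ, condProb m1 μ ((B ∩ G) ∪ ((X \ B) ∩ Gᶜ)) ω =
      if ω ∈ G then condProb m1 μ B ω else condProb m1 μ X ω - condProb m1 μ B ω := by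
    filter_upwards [condProb_union (m := m1) (hB.inter (hm _ hG))
        ((hX.diff hB).inter (hm _ hG.compl)) hdisj,
      condProb_inter_of_measurableSet hB hG,
      condProb_inter_of_measurableSet (hX.diff hB) hG.compl, condProb_diff (m := m1) hB hX hBX]
      with ω h1 h2 h3 h4
    by_cases hω : ω ∈ G <;> simp [h1, h2, h3, h4, hω]
  refine ⟨_, Set.union_subset (Set.inter_subset_left.trans hBX)
    (Set.inter_subset_left.trans Set.sdiff_subset),
    (hB.inter (hm _ hG)).union ((hX.diff hB).inter (hm _ hG.compl)), ?_, ?_⟩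
  · filter_upwards [hY, hBpos] with ω hY hBpos hXpos
    obtain ⟨h1, h2⟩ := hBpos hXpos
    rw [hY]
    split_ifs <;> linarith
  · filter_upwards [hY] with ω hY
    rw [hY]
    split_ifs with hω
    · exact hω
    · have hω : condProb m1 μ X ω < 2 * condProb m1 μ B ω := not_le.1 hω
      linarith

lemma CondAtomless.exists_subset_two_pow_mul_condProb_le (hm : m1 ≤ m2)
    (hca : CondAtomless m1 m2 μ) (hX : MeasurableSet[m2] X) (n : ℕ) :
    ∃ Y ⊆ X, MeasurableSet[m2] Y ∧ (∀ᵐ ω ∂μ, 0 < condProb m1 μ X ω → 0 < condProb m1 μ Y ω) ∧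
      ∀ᵐ ω ∂μ, 2 ^ n * condProb m1 μ Y ω ≤ condProb m1 μ X ω := by
  induction n with
  | zero => exact ⟨X, subset_rfl, hX, ae_of_all _ fun _ => id, ae_of_all _ fun _ => by simp⟩
  | succ n ih =>
    obtain ⟨Y, hYX, hY, hYpos, hYle⟩ := ih
    obtain ⟨Z, hZY, hZ, hZpos, hZle⟩ := hca.exists_subset_two_mul_condProb_le hm hY
    refine ⟨Z, hZY.trans hYX, hZ, ?_, ?_⟩
    · filter_upwards [hYpos, hZpos] with ω h1 h2 h
      exact h2 (h1 h)
    · filter_upwards [hYle, hZle] with ω h1 h2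
      calc 2 ^ (n + 1) * condProb m1 μ Z ω = 2 ^ n * (2 * condProb m1 μ Z ω) := by ring
        _ ≤ 2 ^ n * condProb m1 μ Y ω := by gcongr
        _ ≤ condProb m1 μ X ω := h1

lemma CondAtomless.exists_seq_subset_condProb_pos_tendsto_zero (hm : m1 ≤ m2)
    (hca : CondAtomless m1 m2 μ) (hX : MeasurableSet[m2] X) :
    ∃ Y : ℕ → Set Ω, (∀ n, Y n ⊆ X) ∧ (∀ n, MeasurableSet[m2] (Y n)) ∧
      (∀ n, ∀ᵐ ω ∂μ, 0 < condProb m1 μ X ω → 0 < condProb m1 μ (Y n) ω) ∧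
      Tendsto (fun n => μ.real (Y n)) atTop (𝓝 0) := by
  choose Y hYX hY hYpos hYle using hca.exists_subset_two_pow_mul_condProb_le hm hX
  have hlim : Tendsto (fun n : ℕ => μ.real X / 2 ^ n) atTop (𝓝 0) := by
    simpa [div_eq_mul_inv] using (tendsto_inv_atTop_zero.comp
      (tendsto_pow_atTop_atTop_of_one_lt one_lt_two)).const_mul (μ.real X)
  refine ⟨Y, hYX, hY, hYpos, squeeze_zero (fun _ => measureReal_nonneg) (fun n => ?_) hlim⟩
  rw [le_div_iff₀ (by positivity), mul_comm]
  exact measureReal_le_of_condProb_le hm hX (hY n) (hYle n)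

end Atomless

section UtilityOfIndicators

variable {Ω : Type*} {m1 m2 : MeasurableSpace Ω} {μ : @Measure Ω m2} [IsFiniteMeasure μ]
  {u : (Ω → ℝ) → Ω → ℝ} {B : Set Ω} {h : Ω → ℝ}

lemma LebesgueProp.indicator_iUnion_le (hLeb : LebesgueProp μ u) {B : ℕ → Set Ω}
    (hB_mono : Monotone B) (hB : ∀ n, MeasurableSet[m2] (B n))
    (hBh : ∀ n, u ((B n).indicator 1) ≤ᵐ[μ] h) :
    u ((⋃ n, B n).indicator 1) ≤ᵐ[μ] h := by
  have hconv : TendstoInMeasure μ (fun n => (B n).indicator (1 : Ω → ℝ)) atTop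
      ((⋃ n, B n).indicator 1) := by
    refine tendstoInMeasure_of_tendsto_ae
      (fun n => (measurable_indicator_one (hB n)).aestronglyMeasurable) (ae_of_all _ fun ω => ?_)
    simp only [Pi.one_def, tendsto_indicator_const_apply_iff_eventually]
    by_cases hω : ω ∈ ⋃ n, B n
    · obtain ⟨n, hn⟩ := Set.mem_iUnion.1 hω
      exact eventually_atTop.2 ⟨n, fun k hk => iff_of_true (hB_mono hk hn) hω⟩
    · exact Eventually.of_forall fun n => iff_of_false (fun h => hω (Set.mem_iUnion_of_mem n h)) hω
  exact (hLeb _ _ (fun n => measurable_indicator_one (hB n))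
    (measurable_indicator_one (.iUnion hB)) ⟨1, fun n => abs_indicator_one_le _⟩
    (Bdd.indicator_one _) hconv).ae_le_of_forall_ae_le hBh

lemma CondAtomless.exists_seq_subset_utility_tendsto (hm : m1 ≤ m2) (hca : CondAtomless m1 m2 μ)
    (hLeb : LebesgueProp μ u) {X : Set Ω} (hB : MeasurableSet[m2] B) (hX : MeasurableSet[m2] X) :
    ∃ Y : ℕ → Set Ω, (∀ n, Y n ⊆ X) ∧ (∀ n, MeasurableSet[m2] (Y n)) ∧
      (∀ n, ∀ᵐ ω ∂μ, 0 < condProb m1 μ X ω → 0 < condProb m1 μ (Y n) ω) ∧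
      ∀ᵐ ω ∂μ, Tendsto (fun n => u ((B ∪ Y n).indicator 1) ω) atTop
        (𝓝 (u (B.indicator 1) ω)) := by
  obtain ⟨Y, hYX, hY, hYpos, hYsmall⟩ := hca.exists_seq_subset_condProb_pos_tendsto_zero hm hX
  obtain ⟨ns, -, hns⟩ := (hLeb _ _ (fun n => measurable_indicator_one (hB.union (hY n)))
    (measurable_indicator_one hB) ⟨1, fun n => abs_indicator_one_le _⟩ (Bdd.indicator_one B)
    (tendstoInMeasure_indicator_union B hYsmall)).exists_seq_tendsto_ae
  exact ⟨fun k => Y (ns k), fun k => hYX _, fun k => hY _, fun k => hYpos _, hns⟩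

/-- Up to a null set, `B` together with the `F₁`-set where `P(Bᶜ | F₁)` vanishes is `B`; on that
set the utility of `1_B` is therefore that of the constant `1`. -/
lemma CondCoherentUtility.ae_condProb_compl_pos (hm : m1 ≤ m2)
    (hu : CondCoherentUtility m1 m2 μ u) (hLeb : LebesgueProp μ u) (hB : MeasurableSet[m2] B) :
    ∀ᵐ ω ∂μ, u (B.indicator 1) ω < 1 → 0 < condProb m1 μ Bᶜ ω := by
  set E := {ω | condProb m1 μ Bᶜ ω = 0}
  have hE : MeasurableSet[m1] E := measurableSet_eq_fun measurable_condProb measurable_const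
  have hnull : μ (Bᶜ ∩ E) = 0 := by
    refine (measure_eq_zero_iff_condProb_ae_eq_zero hm (hB.compl.inter (hm _ hE))).2 ?_
    filter_upwards [condProb_inter_of_measurableSet hB.compl hE] with ω hω
    by_cases hωE : ω ∈ E
    · rw [hω, Set.indicator_of_mem hωE]
      exact hωE
    · rw [hω, Set.indicator_of_notMem hωE]
      rfl
  have hBE : (B ∪ E).indicator (1 : Ω → ℝ) =ᵐ[μ] B.indicator 1 := by
    filter_upwards [measure_eq_zero_iff_ae_notMem.1 hnull] with ω hω
    by_cases hωB : ω ∈ B <;> by_cases hωE : ω ∈ E <;> simp_all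
  have hmBE : Measurable[m2] ((B ∪ E).indicator (1 : Ω → ℝ)) :=
    measurable_indicator_one (hB.union (hm _ hE))
  filter_upwards [hu.ae_eq_of_ae_eq hm hLeb hmBE (Bdd.indicator_one _)
      (measurable_indicator_one hB) (Bdd.indicator_one _) hBE,
    hu.ae_eq_of_eqOn hE hmBE (Bdd.indicator_one _) measurable_const (Bdd.const 1)
      (fun ω hω => by simp [hω]), hu.map_const 1, condProb_nonneg] with ω h1 h2 h3 h4 hlt
  refine h4.lt_of_ne fun h0 => ?_
  rw [← h1, h2 h0.symm, h3] at hlt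
  exact lt_irrefl _ hlt

lemma CondCoherentUtility.exists_disjoint_utility_le (hm : m1 ≤ m2) (hca : CondAtomless m1 m2 μ)
    (hu : CondCoherentUtility m1 m2 μ u) (hLeb : LebesgueProp μ u) (hh : Measurable[m1] h)
    (hh1 : h ≤ᵐ[μ] 1) (hB : MeasurableSet[m2] B) (hBh : u (B.indicator 1) ≤ᵐ[μ] h)
    (hD : μ {ω | u (B.indicator 1) ω < h ω} ≠ 0) :
    ∃ C, MeasurableSet[m2] C ∧ Disjoint B C ∧ u ((B ∪ C).indicator 1) ≤ᵐ[μ] h ∧ μ C ≠ 0 := by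
  obtain ⟨Y, hYB, hY, hYpos, hYlim⟩ := hca.exists_seq_subset_utility_tendsto hm hLeb hB hB.compl
  have hBY : ∀ n, MeasurableSet[m2] (B ∪ Y n) := fun n => hB.union (hY n)
  have huB := (hu.measurable_map _ (measurable_indicator_one hB) (Bdd.indicator_one B)).1
  have huBY := fun n =>
    (hu.measurable_map _ (measurable_indicator_one (hBY n)) (Bdd.indicator_one (B ∪ Y n))).1
  set D := {ω | u (B.indicator 1) ω < h ω}
  set G : ℕ → Set Ω := fun n => D ∩ {ω | u ((B ∪ Y n).indicator 1) ω ≤ h ω}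
  have hG : ∀ n, MeasurableSet[m1] (G n) := fun n =>
    (measurableSet_lt huB hh).inter (measurableSet_le (huBY n) hh)
  obtain ⟨n, hn⟩ : ∃ n, μ (G n) ≠ 0 := by
    by_contra! hG0
    have hcover : D ≤ᵐ[μ] ⋃ n, G n := by
      filter_upwards [hYlim] with ω hω (hωD : ω ∈ D)
      obtain ⟨n, hn⟩ := (hω.eventually_lt_const hωD).exists
      exact Set.mem_iUnion.2 ⟨n, hωD, hn.le⟩
    exact hD (measure_mono_null_ae hcover (measure_iUnion_null hG0))
  refine ⟨Y n ∩ G n, (hY n).inter (hm _ (hG n)),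
    Set.disjoint_of_subset_right (Set.inter_subset_left.trans (hYB n)) disjoint_compl_right,
    ?_, ?_⟩
  · have hmC := measurable_indicator_one (hB.union ((hY n).inter (hm _ (hG n))))
    filter_upwards [hu.ae_eq_of_eqOn (hG n) hmC (Bdd.indicator_one _)
        (measurable_indicator_one (hBY n)) (Bdd.indicator_one _) fun ω (hω : ω ∈ G n) => by
          by_cases hωB : ω ∈ B <;> by_cases hωY : ω ∈ Y n <;> simp [hωB, hωY, hω],
      hu.ae_eq_of_eqOn (hG n).compl hmC (Bdd.indicator_one _) (measurable_indicator_one hB)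
        (Bdd.indicator_one _) fun ω (hω : ω ∉ G n) => by
          by_cases hωB : ω ∈ B <;> simp [hωB, hω], hBh]
      with ω hin hout hBh
    by_cases hω : ω ∈ G n
    · rw [hin hω]
      exact hω.2
    · rw [hout hω]
      exact hBh
  · refine measure_inter_ne_zero_of_condProb_pos hm (hY n) (hG n) hn ?_
    filter_upwards [hYpos n, hu.ae_condProb_compl_pos hm hLeb hB, hh1] with ω hpos hcompl hh1 hω
    exact hpos (hcompl (hω.1.trans_le hh1))

theorem CondCoherentUtility.exists_utility_indicator_eq (hm : m1 ≤ m2)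
    (hca : CondAtomless m1 m2 μ) (hu : CondCoherentUtility m1 m2 μ u) (hLeb : LebesgueProp μ u)
    (hh : Measurable[m1] h) (hh0 : 0 ≤ᵐ[μ] h) (hh1 : h ≤ᵐ[μ] 1) :
    ∃ S, MeasurableSet[m2] S ∧ u (S.indicator 1) =ᵐ[μ] h := by
  obtain ⟨S, hS, hSh, hmax⟩ := exists_measurableSet_maximal (μ := μ)
    (fun B => u (B.indicator 1) ≤ᵐ[μ] h)
    (by rw [Set.indicator_empty]; exact hu.map_zero.trans_le hh0)
    (fun A B hA hB hAB hBh => (hu.mono (measurable_indicator_one hA) (Bdd.indicator_one A)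
      (measurable_indicator_one hB) (Bdd.indicator_one B)
      (Set.indicator_le_indicator_of_subset hAB fun _ => zero_le_one)).trans hBh)
    (fun B hB_mono hB hBh => hLeb.indicator_iUnion_le hB_mono hB hBh)
  refine ⟨S, hS, ?_⟩
  have hD : μ {ω | u (S.indicator 1) ω < h ω} = 0 := by
    by_contra hD
    obtain ⟨C, hC, hSC, hCh, hC0⟩ := hu.exists_disjoint_utility_le hm hca hLeb hh hh1 hS hSh hD
    exact hC0 (hmax C hC hSC hCh)
  filter_upwards [hSh, measure_eq_zero_iff_ae_notMem.1 hD] with ω h1 h2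
  exact h1.antisymm (not_lt.1 h2)

end UtilityOfIndicators

lemma exists_abs_le_ae_eq {Ω : Type*} {m m₀ : MeasurableSpace Ω} {μ : @Measure Ω m₀} {f : Ω → ℝ}
    (hf : Measurable[m] f) {M : ℝ} (hM : 0 ≤ M) (hfM : ∀ᵐ ω ∂μ, |f ω| ≤ M) :
    ∃ a, Measurable[m] a ∧ (∀ ω, |a ω| ≤ M) ∧ a =ᵐ[μ] f := by
  refine ⟨fun ω => max (-M) (min M (f ω)), measurable_const.max (measurable_const.min hf),
    fun ω => abs_le.2 ⟨le_max_left _ _, max_le (by linarith) (min_le_left _ _)⟩, ?_⟩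
  filter_upwards [hfM] with ω hω
  rw [abs_le] at hω
  simp [min_eq_right hω.2, max_eq_right hω.1]

section ComonotonePair

variable {Ω : Type*}

lemma abs_mul_indicator_add_le {S : Set Ω} {c C : ℝ} {β : Ω → ℝ} (hc : 0 ≤ c) (ω : Ω)
    (h1 : -C ≤ β ω) (h2 : c + β ω ≤ C) : |c * S.indicator 1 ω + β ω| ≤ C := by
  by_cases hω : ω ∈ S <;> simp only [hω, Set.indicator_of_mem, Set.indicator_of_notMem,
    not_false_eq_true, Pi.one_apply, mul_one, mul_zero, zero_add] <;>
    exact abs_le.2 ⟨by linarith, by linarith⟩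

lemma comonotone'_mul_indicator_add {S : Set Ω} {c d a : ℝ} {β : Ω → ℝ} (hc : 0 ≤ c)
    (hβ : ∀ ω ω', β ω - β ω' ≤ d) :
    Comonotone' (fun ω => c * S.indicator 1 ω + a) (fun ω => d * S.indicator 1 ω + β ω) := by
  intro ω ω'
  have h1 := hβ ω ω'
  have h2 := hβ ω' ω
  by_cases hω : ω ∈ S <;> by_cases hω' : ω' ∈ S <;> simp [hω, hω'] <;> nlinarith

variable {m1 m2 : MeasurableSpace Ω} {μ : @Measure Ω m2} [IsFiniteMeasure μ]
  {u : (Ω → ℝ) → Ω → ℝ}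

theorem CondCoherentUtility.exists_comonotone_utility_eq (hm : m1 ≤ m2)
    (hca : CondAtomless m1 m2 μ) (hu : CondCoherentUtility m1 m2 μ u) (hLeb : LebesgueProp μ u)
    {M : ℝ} (hM : 0 ≤ M) {a b : Ω → ℝ} (ha : Measurable[m1] a) (hb : Measurable[m1] b)
    (haM : ∀ ω, |a ω| ≤ M) (hbM : ∀ ω, |b ω| ≤ M) :
    ∃ ξ η : Ω → ℝ, Measurable[m2] ξ ∧ Measurable[m2] η ∧ (∀ ω, |ξ ω| ≤ 3 * M) ∧
      (∀ ω, |η ω| ≤ 3 * M) ∧ Comonotone' ξ η ∧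
      u ξ =ᵐ[μ] a ∧ u η =ᵐ[μ] b ∧ u (ξ + η) =ᵐ[μ] a + b := by
  set r : Ω → ℝ := fun ω => a ω / M
  have hr : ∀ ω, M * r ω = a ω := fun ω =>
    mul_div_cancel_of_imp' fun h0 => abs_nonpos_iff.1 (h0 ▸ haM ω)
  have hr_bd : ∀ ω, -1 ≤ r ω ∧ r ω ≤ 1 := fun ω => abs_le.1 <| by
    rw [abs_div, abs_of_nonneg hM]
    exact div_le_one_of_le₀ (haM ω) hM
  obtain ⟨S, hS, hSh⟩ := hu.exists_utility_indicator_eq (h := fun ω => 1 / 2 + r ω / 6) hm hca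
    hLeb (measurable_const.add ((ha.div_const _).div_const _))
    (ae_of_all _ fun ω => show (0 : ℝ) ≤ 1 / 2 + r ω / 6 by linarith [hr_bd ω])
    (ae_of_all _ fun ω => show 1 / 2 + r ω / 6 ≤ 1 by linarith [hr_bd ω])
  set β : Ω → ℝ := fun ω => b ω - a ω / 2 - 3 * M / 2
  have hβ : Measurable[m1] β := (hb.sub (ha.div_const 2)).sub measurable_const
  have hβ_bd : ∀ ω, -(3 * M) ≤ β ω ∧ β ω ≤ 0 := fun ω => by
    have := abs_le.1 (haM ω)
    have := abs_le.1 (hbM ω)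
    simp only [β]
    constructor <;> linarith
  have hβb : Bdd β := ⟨3 * M, fun ω => abs_le.2 ⟨(hβ_bd ω).1, by linarith [(hβ_bd ω).2]⟩⟩
  have hsum : (fun ω => 6 * M * S.indicator 1 ω + -(3 * M)) +
      (fun ω => 3 * M * S.indicator 1 ω + β ω) =
      fun ω => 9 * M * S.indicator 1 ω + (β ω + -(3 * M)) := by
    ext ω
    simp only [Pi.add_apply]
    ring
  refine ⟨fun ω => 6 * M * S.indicator 1 ω + -(3 * M), fun ω => 3 * M * S.indicator 1 ω + β ω,
    ((measurable_indicator_one hS).const_mul _).add measurable_const,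
    ((measurable_indicator_one hS).const_mul _).add (hβ.mono hm le_rfl),
    fun ω => abs_mul_indicator_add_le (β := fun _ => -(3 * M)) (by positivity) ω (by simp)
      (by linarith),
    fun ω => abs_mul_indicator_add_le (by positivity) ω (hβ_bd ω).1 (by linarith [(hβ_bd ω).2]),
    comonotone'_mul_indicator_add (by positivity) fun ω ω' => by
      linarith [hβ_bd ω, hβ_bd ω'], ?_, ?_, ?_⟩
  · filter_upwards [hu.map_mul_indicator_add_of_ae_eq hS hSh (c := 6 * M) (by positivity)
      measurable_const (Bdd.const (-(3 * M)))] with ω h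
    rw [h]
    linear_combination hr ω
  · filter_upwards [hu.map_mul_indicator_add_of_ae_eq hS hSh (c := 3 * M) (by positivity) hβ hβb]
      with ω h
    rw [h]
    linear_combination (1 / 2 : ℝ) * hr ω
  · rw [hsum]
    filter_upwards [hu.map_mul_indicator_add_of_ae_eq hS hSh (c := 9 * M) (by positivity)
      (β := fun ω => β ω + -(3 * M)) (hβ.add measurable_const) (hβb.add (Bdd.const _))] with ω h
    rw [h, Pi.add_apply]
    linear_combination (3 / 2 : ℝ) * hr ω

end ComonotonePair

/-- If `F₂` is atomless conditionally to `F₁` and `u_{1,2}` is a Lebesgue continuous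
conditional coherent utility, then for any bounded `F₁`-measurable `f, g` there are
comonotone `ξ, η ∈ L^∞(F₂)` with `u_{1,2}(ξ) = f`, `u_{1,2}(η) = g`,
`u_{1,2}(ξ + η) = f + g` and `‖ξ‖_∞, ‖η‖_∞ ≤ 3 max(‖f‖_∞, ‖g‖_∞)`. -/
theorem stmt_12 {Ω : Type*} {m1 m2 : MeasurableSpace Ω} (hm : m1 ≤ m2)
    (μ : @Measure Ω m2) [IsProbabilityMeasure μ]
    (hca : CondAtomless m1 m2 μ)
    (u : (Ω → ℝ) → Ω → ℝ) (hu : CondCoherentUtility m1 m2 μ u)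
    (hLeb : LebesgueProp μ u)
    (f g : Ω → ℝ) (hf : Measurable[m1] f) (hfb : Bdd f)
    (hg : Measurable[m1] g) (hgb : Bdd g) :
    ∃ ξ η : Ω → ℝ, Measurable[m2] ξ ∧ Measurable[m2] η ∧ Bdd ξ ∧ Bdd η ∧
      Comonotone' ξ η ∧
      u ξ =ᵐ[μ] f ∧ u η =ᵐ[μ] g ∧ u (ξ + η) =ᵐ[μ] f + g ∧
      eLpNorm ξ ⊤ μ ≤ 3 * max (eLpNorm f ⊤ μ) (eLpNorm g ⊤ μ) ∧
      eLpNorm η ⊤ μ ≤ 3 * max (eLpNorm f ⊤ μ) (eLpNorm g ⊤ μ) := by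
  set N := max (eLpNorm f ⊤ μ) (eLpNorm g ⊤ μ)
  have hN : N ≠ ⊤ := max_ne_top hfb.eLpNorm_ne_top hgb.eLpNorm_ne_top
  obtain ⟨a, ha, haN, haf⟩ := exists_abs_le_ae_eq hf ENNReal.toReal_nonneg
    (ae_abs_le_toReal_of_eLpNorm_top_le (le_max_left _ _) hN)
  obtain ⟨b, hb, hbN, hbg⟩ := exists_abs_le_ae_eq hg ENNReal.toReal_nonneg
    (ae_abs_le_toReal_of_eLpNorm_top_le (le_max_right _ _) hN)
  obtain ⟨ξ, η, hξ, hη, hξN, hηN, hcomon, huξ, huη, huξη⟩ :=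
    hu.exists_comonotone_utility_eq hm hca hLeb ENNReal.toReal_nonneg ha hb haN hbN
  have h3N : ENNReal.ofReal (3 * N.toReal) = 3 * N := by
    rw [ENNReal.ofReal_mul zero_le_three, ENNReal.ofReal_toReal hN, ENNReal.ofReal_ofNat]
  exact ⟨ξ, η, hξ, hη, ⟨_, hξN⟩, ⟨_, hηN⟩, hcomon, huξ.trans haf, huη.trans hbg,
    huξη.trans (haf.add hbg), h3N ▸ eLpNorm_top_le_ofReal hξN, h3N ▸ eLpNorm_top_le_ofReal hηN⟩
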